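/- For every integer n ≥ 6, every real x ≥ 0, and all r_a, r_b ∈ [0,1], the following inequality holds: (r_b + n − 2)·x² + x·(2·√((1+r_a)(1+r_b)) − 2n + 2) + r_a + n − 2 ≥ 0. -/

import Mathlib

/-!
Write `a = r_a + n - 2`, `b = r_b + n - 2` and `s = √((1 + r_a)(1 + r_b))`. By AM-GM,
`b x² + a ≥ 2 √(ab) x`, so for `x ≥ 0` it suffices that `√(ab) + s ≥ n - 1`. With `p = 1 + r_a`,
`q = 1 + r_b` and `m = n - 3`, Cauchy-Schwarz gives `√((p + m)(q + m)) ≥ √(pq) + m`, and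
`√(pq) ≥ 1` since `p, q ≥ 1`.
-/

open Real

lemma sqrt_mul_add_le_sqrt_add_mul_add {p q m : ℝ} (hp : 0 ≤ p) (hq : 0 ≤ q) (hm : 0 ≤ m) :
    √(p * q) + m ≤ √((p + m) * (q + m)) := by
  have amgm : 2 * √(p * q) ≤ p + q := by
    rw [sqrt_mul hp]
    nlinarith [sq_nonneg (√p - √q), sq_sqrt hp, sq_sqrt hq]
  apply le_sqrt_of_sq_le
  nlinarith [sq_sqrt (mul_nonneg hp hq)]

lemma add_two_le_sqrt_add_mul_add_add_sqrt_mul {p q m : ℝ} (hp : 1 ≤ p) (hq : 1 ≤ q)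
    (hm : 0 ≤ m) : m + 2 ≤ √((p + m) * (q + m)) + √(p * q) := by
  have one_le : 1 ≤ √(p * q) := one_le_sqrt.mpr (one_le_mul_of_one_le_of_one_le hp hq)
  linarith [sqrt_mul_add_le_sqrt_add_mul_add (zero_le_one.trans hp) (zero_le_one.trans hq) hm]

lemma two_mul_sqrt_mul_mul_le {a b : ℝ} (ha : 0 ≤ a) (hb : 0 ≤ b) (x : ℝ) :
    2 * √(a * b) * x ≤ b * x ^ 2 + a := by
  rw [sqrt_mul ha]
  nlinarith [sq_nonneg (√b * x - √a), sq_sqrt ha, sq_sqrt hb]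

theorem scalar_compat_midpoint_half (n : ℕ) (hn : 6 ≤ n) (x ra rb : ℝ)
    (hx : 0 ≤ x) (hra0 : 0 ≤ ra) (hrb0 : 0 ≤ rb) :
    0 ≤ (rb + (n : ℝ) - 2) * x ^ 2
        + x * (2 * Real.sqrt ((1 + ra) * (1 + rb)) - 2 * (n : ℝ) + 2)
        + ra + (n : ℝ) - 2 := by
  have hm : (0 : ℝ) ≤ n - 3 := by
    have : (6 : ℝ) ≤ n := by exact_mod_cast hn
    linarith
  have key : (n : ℝ) - 1 ≤ √((ra + n - 2) * (rb + n - 2)) + √((1 + ra) * (1 + rb)) := by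
    have := add_two_le_sqrt_add_mul_add_add_sqrt_mul (by linarith : 1 ≤ 1 + ra)
      (by linarith : 1 ≤ 1 + rb) hm
    convert this using 4 <;> ring
  have amgm := two_mul_sqrt_mul_mul_le (by linarith : 0 ≤ ra + n - 2)
    (by linarith : 0 ≤ rb + n - 2) x
  linarith [mul_le_mul_of_nonneg_left key hx]
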